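/- Let T : S → S be a contraction with constant δ ∈ (0,1) on a nonempty closed convex subset S of a Banach space B, with fixed point x⋆. If sequences α_n¹, α_n², α_n³ ∈ [0,1] satisfy ∑_{k} α_k¹ = ∞, then the Karahan–Özdemir iteration sequence {p_n} converges to x⋆, and moreover ‖p_{n+1} - x⋆‖ ≤ ‖p₀ - x⋆‖ · exp(-(1-δ) ∑_{k=0}^{n} α_k¹). -/

import Mathlib

/-! Each step contracts the distance to the fixed point: `‖r_n - x⋆‖ ≤ ‖p_n - x⋆‖`,
`‖q_n - x⋆‖ ≤ δ ‖p_n - x⋆‖`, and hence `‖p_{n+1} - x⋆‖ ≤ (1 - (1 - δ) α_n¹) ‖p_n - x⋆‖`.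
Since `1 - t ≤ exp (-t)`, the product of these factors is at most `exp (-(1 - δ) ∑ α_k¹)`,
which tends to `0` because `∑ α_k¹` diverges. -/

open Filter Set

section ConvexCombination

variable {B : Type*} [NormedAddCommGroup B] [NormedSpace ℝ B]

lemma Convex.one_sub_smul_add_smul_mem {S : Set B} (hS : Convex ℝ S) {a : ℝ} (ha : a ∈ Icc (0 : ℝ) 1)
    {x y : B} (hx : x ∈ S) (hy : y ∈ S) : (1 - a) • x + a • y ∈ S :=
  hS hx hy (by linarith [ha.2]) ha.1 (by ring)

lemma norm_one_sub_smul_add_smul_sub_le {a : ℝ} (ha : a ∈ Icc (0 : ℝ) 1) {x y z : B} {c d : ℝ}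
    (hx : ‖x - z‖ ≤ c) (hy : ‖y - z‖ ≤ d) :
    ‖(1 - a) • x + a • y - z‖ ≤ (1 - a) * c + a * d := by
  have h1a : 0 ≤ 1 - a := by linarith [ha.2]
  calc ‖(1 - a) • x + a • y - z‖ = ‖(1 - a) • (x - z) + a • (y - z)‖ := by
        congr 1; simp only [smul_sub, sub_smul, one_smul]; abel
    _ ≤ (1 - a) * ‖x - z‖ + a * ‖y - z‖ :=
        convexOn_univ_norm.2 trivial trivial h1a ha.1 (by ring)
    _ ≤ (1 - a) * c + a * d := by gcongr; exact ha.1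

end ConvexCombination

/-- The map `p_n ↦ p_{n+1}` of the Karahan–Özdemir iteration with parameters
`α_n¹ = a`, `α_n² = b`, `α_n³ = c`. -/
def karahanOzdemirStep {B : Type*} [AddCommGroup B] [Module ℝ B] (T : B → B) (a b c : ℝ)
    (x : B) : B :=
  let r := (1 - c) • x + c • T x
  let q := (1 - b) • T x + b • T r
  (1 - a) • T x + a • T q

section KarahanOzdemirStep

variable {B : Type*} [NormedAddCommGroup B] [NormedSpace ℝ B] {S : Set B} {T : B → B}
  {a b c : ℝ}

lemma karahanOzdemirStep_mem (hS : Convex ℝ S) (hTS : ∀ x ∈ S, T x ∈ S)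
    (ha : a ∈ Icc (0 : ℝ) 1) (hb : b ∈ Icc (0 : ℝ) 1) (hc : c ∈ Icc (0 : ℝ) 1)
    {x : B} (hx : x ∈ S) : karahanOzdemirStep T a b c x ∈ S := by
  have hr := hS.one_sub_smul_add_smul_mem hc hx (hTS x hx)
  have hq := hS.one_sub_smul_add_smul_mem hb (hTS x hx) (hTS _ hr)
  exact hS.one_sub_smul_add_smul_mem ha (hTS x hx) (hTS _ hq)

lemma norm_karahanOzdemirStep_sub_le (hS : Convex ℝ S) (hTS : ∀ x ∈ S, T x ∈ S)
    {δ : ℝ} (hδ : δ ∈ Icc (0 : ℝ) 1) {xs : B}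
    (hTxs : ∀ x ∈ S, ‖T x - xs‖ ≤ δ * ‖x - xs‖)
    (ha : a ∈ Icc (0 : ℝ) 1) (hb : b ∈ Icc (0 : ℝ) 1) (hc : c ∈ Icc (0 : ℝ) 1)
    {x : B} (hx : x ∈ S) :
    ‖karahanOzdemirStep T a b c x - xs‖ ≤ (1 - (1 - δ) * a) * ‖x - xs‖ := by
  have hrS := hS.one_sub_smul_add_smul_mem hc hx (hTS x hx)
  have hqS := hS.one_sub_smul_add_smul_mem hb (hTS x hx) (hTS _ hrS)
  have hTx := hTxs x hx
  set e := ‖x - xs‖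
  have he : 0 ≤ e := norm_nonneg _
  have hr : ‖(1 - c) • x + c • T x - xs‖ ≤ e := by
    refine (norm_one_sub_smul_add_smul_sub_le hc le_rfl hTx).trans ?_
    nlinarith [mul_nonneg (mul_nonneg hc.1 (sub_nonneg.2 hδ.2)) he]
  have hq : ‖(1 - b) • T x + b • T ((1 - c) • x + c • T x) - xs‖ ≤ δ * e := by
    have hTr := (hTxs _ hrS).trans (mul_le_mul_of_nonneg_left hr hδ.1)
    refine (norm_one_sub_smul_add_smul_sub_le hb hTx hTr).trans_eq ?_
    ring
  have hTq := (hTxs _ hqS).trans (mul_le_mul_of_nonneg_left hq hδ.1)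
  refine (norm_one_sub_smul_add_smul_sub_le ha hTx hTq).trans ?_
  -- `(1 - a) δ + a δ² = δ (1 - (1 - δ) a) ≤ 1 - (1 - δ) a`
  have hfac : 0 ≤ 1 - (1 - δ) * a := by nlinarith [mul_nonneg hδ.1 ha.1, ha.2]
  nlinarith [mul_nonneg (mul_nonneg (sub_nonneg.2 hδ.2) hfac) he]

end KarahanOzdemirStep

lemma le_mul_exp_neg_mul_sum_of_le_one_sub_mul {e a : ℕ → ℝ} {c : ℝ} (he : ∀ n, 0 ≤ e n)
    (hstep : ∀ n, e (n + 1) ≤ (1 - c * a n) * e n) (n : ℕ) :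
    e n ≤ e 0 * Real.exp (-c * ∑ k ∈ Finset.range n, a k) := by
  induction n with
  | zero => simp
  | succ n ih =>
    have hexp : 1 - c * a n ≤ Real.exp (-c * a n) := by
      linarith [Real.add_one_le_exp (-c * a n)]
    calc e (n + 1) ≤ (1 - c * a n) * e n := hstep n
      _ ≤ Real.exp (-c * a n) * (e 0 * Real.exp (-c * ∑ k ∈ Finset.range n, a k)) :=
          mul_le_mul hexp ih (he n) (Real.exp_nonneg _)
      _ = e 0 * Real.exp (-c * ∑ k ∈ Finset.range (n + 1), a k) := by
          rw [Finset.sum_range_succ, mul_add, Real.exp_add]; ring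

theorem stmt_4_general {B : Type*} [NormedAddCommGroup B] [NormedSpace ℝ B]
    (S : Set B) (hSco : Convex ℝ S)
    (T : B → B) (hTS : ∀ x ∈ S, T x ∈ S)
    (δ : ℝ) (hδ : δ ∈ Set.Ioo (0 : ℝ) 1)
    (hT : ∀ x ∈ S, ∀ y ∈ S, ‖T x - T y‖ ≤ δ * ‖x - y‖)
    (xs : B) (hxs : xs ∈ S) (hfix : T xs = xs)
    (α1 α2 α3 : ℕ → ℝ)
    (hα1 : ∀ n, α1 n ∈ Set.Icc (0 : ℝ) 1) (hα2 : ∀ n, α2 n ∈ Set.Icc (0 : ℝ) 1)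
    (hα3 : ∀ n, α3 n ∈ Set.Icc (0 : ℝ) 1)
    (hdiv : Tendsto (fun n => ∑ k ∈ Finset.range n, α1 k) atTop atTop)
    (p q r : ℕ → B) (hp0 : p 0 ∈ S)
    (hp : ∀ n, p (n + 1) = (1 - α1 n) • T (p n) + α1 n • T (q n))
    (hq : ∀ n, q n = (1 - α2 n) • T (p n) + α2 n • T (r n))
    (hr : ∀ n, r n = (1 - α3 n) • p n + α3 n • T (p n)) :
    Tendsto p atTop (nhds xs) ∧
      ∀ n, ‖p (n + 1) - xs‖ ≤
        ‖p 0 - xs‖ * Real.exp (-(1 - δ) * ∑ k ∈ Finset.range (n + 1), α1 k) := by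
  have hstep n : p (n + 1) = karahanOzdemirStep T (α1 n) (α2 n) (α3 n) (p n) := by
    rw [hp, hq, hr]; rfl
  have hpS n : p n ∈ S := by
    induction n with
    | zero => exact hp0
    | succ n ih => exact hstep n ▸ karahanOzdemirStep_mem hSco hTS (hα1 n) (hα2 n) (hα3 n) ih
  have hTxs : ∀ x ∈ S, ‖T x - xs‖ ≤ δ * ‖x - xs‖ := fun x hx => by
    simpa only [hfix] using hT x hx xs hxs
  have hbound := le_mul_exp_neg_mul_sum_of_le_one_sub_mul (fun n => norm_nonneg (p n - xs))
    fun n => hstep n ▸ norm_karahanOzdemirStep_sub_le hSco hTS (Ioo_subset_Icc_self hδ) hTxs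
      (hα1 n) (hα2 n) (hα3 n) (hpS n)
  refine ⟨?_, fun n => hbound (n + 1)⟩
  have hdecay : Tendsto (fun n => ‖p 0 - xs‖ *
      Real.exp (-(1 - δ) * ∑ k ∈ Finset.range n, α1 k)) atTop (nhds 0) := by
    simpa using ((Real.tendsto_exp_atBot.comp
      (hdiv.const_mul_atTop_of_neg (by linarith [hδ.2]))).const_mul ‖p 0 - xs‖)
  exact tendsto_iff_norm_sub_tendsto_zero.2 (squeeze_zero (fun _ => norm_nonneg _) hbound hdecay)

theorem stmt_4 {B : Type*} [NormedAddCommGroup B] [NormedSpace ℝ B] [CompleteSpace B]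
    (S : Set B) (hS : S.Nonempty) (hScl : IsClosed S) (hSco : Convex ℝ S)
    (T : B → B) (hTS : ∀ x ∈ S, T x ∈ S)
    (δ : ℝ) (hδ : δ ∈ Set.Ioo (0 : ℝ) 1)
    (hT : ∀ x ∈ S, ∀ y ∈ S, ‖T x - T y‖ ≤ δ * ‖x - y‖)
    (xs : B) (hxs : xs ∈ S) (hfix : T xs = xs)
    (α1 α2 α3 : ℕ → ℝ)
    (hα1 : ∀ n, α1 n ∈ Set.Icc (0 : ℝ) 1) (hα2 : ∀ n, α2 n ∈ Set.Icc (0 : ℝ) 1)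
    (hα3 : ∀ n, α3 n ∈ Set.Icc (0 : ℝ) 1)
    (hdiv : Tendsto (fun n => ∑ k ∈ Finset.range n, α1 k) atTop atTop)
    (p q r : ℕ → B) (hp0 : p 0 ∈ S)
    (hp : ∀ n, p (n + 1) = (1 - α1 n) • T (p n) + α1 n • T (q n))
    (hq : ∀ n, q n = (1 - α2 n) • T (p n) + α2 n • T (r n))
    (hr : ∀ n, r n = (1 - α3 n) • p n + α3 n • T (p n)) :
    Tendsto p atTop (nhds xs) ∧
      ∀ n, ‖p (n + 1) - xs‖ ≤
        ‖p 0 - xs‖ * Real.exp (-(1 - δ) * ∑ k ∈ Finset.range (n + 1), α1 k) :=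
  stmt_4_general S hSco T hTS δ hδ hT xs hxs hfix α1 α2 α3 hα1 hα2 hα3 hdiv p q r hp0 hp hq hr
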